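/- Let m, n ≥ 1, Ω ⊂ ℝ^m be a bounded domain with smooth boundary, W ∈ C¹((−∞,1],ℝ) satisfy W(0)=0, W(t)>0 for all t ∈ (−∞,1]\{0}, and W strictly convex, and let u_bd ∈ H^{1/2} ∩ L^∞(∂Ω; ℝⁿ) satisfy u_bd · e ≥ 0 ℋ^{m−1}-a.e. on ∂Ω for a fixed unit vector e ∈ 𝕊^{n−1}. Fix ε > 0 and let u_ε ∈ H¹ ∩ L^∞(Ω; ℝⁿ) be a critical point of E_ε in 𝒜 (i.e. a weak solution of −Δu_ε = (1/ε²) u_ε W'(1 − |u_ε|²) with trace u_bd) such that u_ε · e > 0 a.e. in Ω. Then u_ε is a minimiser of E_ε in 𝒜. -/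

import Mathlib

open MeasureTheory Set Bornology

noncomputable section

/-- Euclidean dot product on `Fin n → ℝ`. -/
def dotR {n : ℕ} (a b : Fin n → ℝ) : ℝ := ∑ j, a j * b j

/-- Squared Euclidean norm on `Fin n → ℝ`. -/
def normSq {n : ℕ} (a : Fin n → ℝ) : ℝ := ∑ j, a j ^ 2

/-- Pointwise (Frobenius) inner product of gradients `∇u · ∇v`. -/
def gradDot {m n : ℕ} (u v : (Fin m → ℝ) → Fin n → ℝ) (x : Fin m → ℝ) : ℝ :=
  ∑ i, ∑ j, fderiv ℝ u x (Pi.single i (1:ℝ)) j * fderiv ℝ v x (Pi.single i (1:ℝ)) j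

/-- `|∇u|²`. -/
def gradSq {m n : ℕ} (u : (Fin m → ℝ) → Fin n → ℝ) (x : Fin m → ℝ) : ℝ := gradDot u u x

/-- Scalar version of `gradDot`. -/
def gradDotS {m : ℕ} (φ ψ : (Fin m → ℝ) → ℝ) (x : Fin m → ℝ) : ℝ :=
  ∑ i, fderiv ℝ φ x (Pi.single i (1:ℝ)) * fderiv ℝ ψ x (Pi.single i (1:ℝ))

/-- `|∇φ|²` for scalar `φ`. -/
def gradSqS {m : ℕ} (φ : (Fin m → ℝ) → ℝ) (x : Fin m → ℝ) : ℝ := gradDotS φ φ x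

/-- `W'`, the (one-sided) derivative of the potential on `(-∞, 1]`. -/
def Wd (W : ℝ → ℝ) : ℝ → ℝ := derivWithin W (Iic (1:ℝ))

/-- The Ginzburg–Landau energy `E_ε`. -/
def GLenergy {m n : ℕ} (W : ℝ → ℝ) (ε : ℝ) (Ω : Set (Fin m → ℝ))
    (u : (Fin m → ℝ) → Fin n → ℝ) : ℝ :=
  ∫ x in Ω, (gradSq u x / 2 + W (1 - normSq (u x)) / (2 * ε ^ 2))

/-- The admissible class `𝒜`: `H¹` maps attaining the boundary data `ubd` on `∂Ω`. -/
def Admissible {m n : ℕ} (Ω : Set (Fin m → ℝ)) (ubd u : (Fin m → ℝ) → Fin n → ℝ) : Prop :=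
  ContDiffOn ℝ 1 u Ω ∧ ContinuousOn u (closure Ω) ∧
  IntegrableOn (gradSq u) Ω ∧ IntegrableOn (fun x => normSq (u x)) Ω ∧
  EqOn u ubd (frontier Ω)

/-- `H¹₀(Ω; ℝⁿ)`. -/
def H10 {m n : ℕ} (Ω : Set (Fin m → ℝ)) (v : (Fin m → ℝ) → Fin n → ℝ) : Prop :=
  ContDiffOn ℝ 1 v Ω ∧ ContinuousOn v (closure Ω) ∧
  IntegrableOn (gradSq v) Ω ∧ IntegrableOn (fun x => normSq (v x)) Ω ∧
  EqOn v 0 (frontier Ω)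

/-- `H¹₀(Ω; ℝ)`. -/
def H10S {m : ℕ} (Ω : Set (Fin m → ℝ)) (φ : (Fin m → ℝ) → ℝ) : Prop :=
  ContDiffOn ℝ 1 φ Ω ∧ ContinuousOn φ (closure Ω) ∧
  IntegrableOn (gradSqS φ) Ω ∧ IntegrableOn (fun x => φ x ^ 2) Ω ∧
  EqOn φ 0 (frontier Ω)

/-- Critical point of `E_ε`: weak solution of `-Δu = ε⁻² u W'(1-|u|²)` in `Ω`. -/
def IsCritical {m n : ℕ} (W : ℝ → ℝ) (ε : ℝ) (Ω : Set (Fin m → ℝ))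
    (u : (Fin m → ℝ) → Fin n → ℝ) : Prop :=
  ∀ v, H10 Ω v →
    (∫ x in Ω, (gradDot u v x - 1 / ε ^ 2 * Wd W (1 - normSq (u x)) * dotR (u x) (v x))) = 0

/-- Minimiser of `E_ε` over `𝒜`. -/
def IsMinimiser {m n : ℕ} (W : ℝ → ℝ) (ε : ℝ) (Ω : Set (Fin m → ℝ))
    (ubd u : (Fin m → ℝ) → Fin n → ℝ) : Prop :=
  Admissible Ω ubd u ∧ ∀ v, Admissible Ω ubd v → GLenergy W ε Ω u ≤ GLenergy W ε Ω v

/-- Orthogonal transformation of `ℝⁿ` (element of `O(n)`). -/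
def IsOrth {n : ℕ} (R : (Fin n → ℝ) →ₗ[ℝ] (Fin n → ℝ)) : Prop :=
  Function.Bijective R ∧ ∀ a b, dotR (R a) (R b) = dotR a b

/-! Write `z = v - u`. Convexity of `W` and the weak Euler–Lagrange equation tested with `z` give
`E(v) - E(u) ≥ ½ ∫ (|∇z|² - ε⁻² W'(1 - |u|²) |z|²)`. The scalar function `φ = u · e` is a positive
weak solution of `-Δφ = ε⁻² W'(1 - |u|²) φ`; testing this equation with `ζ² / (φ + δ)` and using
Picone's inequality `∇φ · ∇(ζ² / (φ + δ)) ≤ |∇ζ|²` yields, as `δ → 0`,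
`∫ ε⁻² W'(1 - |u|²) ζ² ≤ ∫ |∇ζ|²` for every scalar `ζ` vanishing on `∂Ω`. Applied to the components
of `z`, this makes the right-hand side nonnegative. -/

open Filter Topology

section Pointwise

variable {m n : ℕ}

lemma normSq_nonneg (a : Fin n → ℝ) : 0 ≤ normSq a :=
  Finset.sum_nonneg fun _ _ => sq_nonneg _

lemma continuous_normSq : Continuous (normSq : (Fin n → ℝ) → ℝ) :=
  continuous_finsetSum _ fun j _ => (continuous_apply j).pow 2

lemma normSq_eq_add (a b : Fin n → ℝ) :
    normSq b = normSq a + 2 * dotR a (b - a) + normSq (b - a) := by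
  simp only [normSq, dotR, Finset.mul_sum, ← Finset.sum_add_distrib, Pi.sub_apply]
  exact Finset.sum_congr rfl fun _ _ => by ring

lemma normSq_sub_le (a b : Fin n → ℝ) : normSq (b - a) ≤ 2 * (normSq a + normSq b) := by
  simp only [normSq, Finset.mul_sum, ← Finset.sum_add_distrib, Pi.sub_apply]
  exact Finset.sum_le_sum fun j _ => by nlinarith [sq_nonneg (a j + b j)]

lemma normSq_smul (c : ℝ) (a : Fin n → ℝ) : normSq (c • a) = c ^ 2 * normSq a := by
  simp only [normSq, Finset.mul_sum, Pi.smul_apply, smul_eq_mul, mul_pow]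

lemma dotR_smul_right (a b : Fin n → ℝ) (c : ℝ) : dotR a (c • b) = dotR a b * c := by
  simp only [dotR, Finset.sum_mul, Pi.smul_apply, smul_eq_mul]
  exact Finset.sum_congr rfl fun _ _ => by ring

lemma measurable_gradDot (u v : (Fin m → ℝ) → Fin n → ℝ) : Measurable (gradDot u v) :=
  Finset.measurable_sum _ fun _ _ => Finset.measurable_sum _ fun j _ =>
    ((measurable_pi_apply j).comp (measurable_fderiv_apply_const ℝ u _)).mul
      ((measurable_pi_apply j).comp (measurable_fderiv_apply_const ℝ v _))

lemma measurable_gradDotS (φ ψ : (Fin m → ℝ) → ℝ) : Measurable (gradDotS φ ψ) :=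
  Finset.measurable_sum _ fun _ _ =>
    (measurable_fderiv_apply_const ℝ φ _).mul (measurable_fderiv_apply_const ℝ ψ _)

lemma gradSq_nonneg (u : (Fin m → ℝ) → Fin n → ℝ) (x : Fin m → ℝ) : 0 ≤ gradSq u x := by
  unfold gradSq gradDot
  exact Finset.sum_nonneg fun _ _ => Finset.sum_nonneg fun _ _ => mul_self_nonneg _

lemma gradSqS_nonneg (φ : (Fin m → ℝ) → ℝ) (x : Fin m → ℝ) : 0 ≤ gradSqS φ x := by
  unfold gradSqS gradDotS
  exact Finset.sum_nonneg fun _ _ => mul_self_nonneg _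

lemma abs_mul_le_add_mul_self_div_two (a b : ℝ) : |a * b| ≤ (a * a + b * b) / 2 :=
  abs_le.2 ⟨by nlinarith [sq_nonneg (a + b)], by nlinarith [sq_nonneg (a - b)]⟩

lemma abs_gradDot_le (u v : (Fin m → ℝ) → Fin n → ℝ) (x : Fin m → ℝ) :
    |gradDot u v x| ≤ (gradSq u x + gradSq v x) / 2 := by
  simp only [gradSq, gradDot, ← Finset.sum_add_distrib, Finset.sum_div]
  refine (Finset.abs_sum_le_sum_abs _ _).trans (Finset.sum_le_sum fun i _ => ?_)
  exact (Finset.abs_sum_le_sum_abs _ _).trans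
    (Finset.sum_le_sum fun j _ => abs_mul_le_add_mul_self_div_two _ _)

lemma abs_gradDotS_le (φ ψ : (Fin m → ℝ) → ℝ) (x : Fin m → ℝ) :
    |gradDotS φ ψ x| ≤ (gradSqS φ x + gradSqS ψ x) / 2 := by
  simp only [gradSqS, gradDotS, ← Finset.sum_add_distrib, Finset.sum_div]
  exact (Finset.abs_sum_le_sum_abs _ _).trans
    (Finset.sum_le_sum fun i _ => abs_mul_le_add_mul_self_div_two _ _)

end Pointwise

section Derivatives

variable {m n : ℕ} {x : Fin m → ℝ}

lemma gradDotS_eq_of_fderiv_eq {φ ψ f g : (Fin m → ℝ) → ℝ} {α β : ℝ}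
    (h : fderiv ℝ ψ x = α • fderiv ℝ f x + β • fderiv ℝ g x) :
    gradDotS φ ψ x = α * gradDotS φ f x + β * gradDotS φ g x := by
  simp only [gradDotS, h, Finset.mul_sum, ← Finset.sum_add_distrib, FunLike.coe_add,
    FunLike.coe_smul, Pi.add_apply, Pi.smul_apply, smul_eq_mul]
  exact Finset.sum_congr rfl fun _ _ => by ring

lemma gradSqS_le_of_fderiv_eq {ψ f g : (Fin m → ℝ) → ℝ} {α β : ℝ}
    (h : fderiv ℝ ψ x = α • fderiv ℝ f x + β • fderiv ℝ g x) :
    gradSqS ψ x ≤ 2 * α ^ 2 * gradSqS f x + 2 * β ^ 2 * gradSqS g x := by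
  simp only [gradSqS, gradDotS, h, Finset.mul_sum, ← Finset.sum_add_distrib,
    FunLike.coe_add, FunLike.coe_smul, Pi.add_apply, Pi.smul_apply, smul_eq_mul]
  exact Finset.sum_le_sum fun i _ => by
    nlinarith [sq_nonneg (α * fderiv ℝ f x (Pi.single i 1) - β * fderiv ℝ g x (Pi.single i 1))]

/-- Picone's pointwise inequality, in the form `|∇ζ - t ∇φ|² ≥ 0`. -/
lemma two_mul_gradDotS_sub_le (φ ζ : (Fin m → ℝ) → ℝ) (x : Fin m → ℝ) (t : ℝ) :
    2 * t * gradDotS φ ζ x - t ^ 2 * gradSqS φ x ≤ gradSqS ζ x := by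
  simp only [gradSqS, gradDotS, Finset.mul_sum, ← Finset.sum_sub_distrib]
  exact Finset.sum_le_sum fun i _ => by
    nlinarith [sq_nonneg (fderiv ℝ ζ x (Pi.single i 1) - t * fderiv ℝ φ x (Pi.single i 1))]

lemma gradSqS_add_const (φ : (Fin m → ℝ) → ℝ) (c : ℝ) :
    gradSqS (fun y => φ y + c) = gradSqS φ := by
  ext x
  simp only [gradSqS, gradDotS, fderiv_add_const]

lemma hasFDerivAt_sq_div {ζ q : (Fin m → ℝ) → ℝ} {ζ' q' : (Fin m → ℝ) →L[ℝ] ℝ}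
    (hζ : HasFDerivAt ζ ζ' x) (hq : HasFDerivAt q q' x) (hx : q x ≠ 0) :
    HasFDerivAt (fun y => ζ y ^ 2 / q y)
      ((2 * (ζ x / q x)) • ζ' + (-(ζ x / q x) ^ 2) • q') x := by
  have hinv : HasFDerivAt (fun y => (q y)⁻¹) ((-(q x ^ 2)⁻¹) • q') x :=
    (hasDerivAt_inv hx).comp_hasFDerivAt x hq
  have h := (hζ.pow 2).fun_mul hinv
  simp only [← div_eq_mul_inv] at h
  refine h.congr_fderiv ?_
  ext w
  simp only [FunLike.coe_add, FunLike.coe_smul, Pi.add_apply, Pi.smul_apply, smul_eq_mul]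
  field_simp
  ring

lemma gradSq_eq_sum_gradSqS {z : (Fin m → ℝ) → Fin n → ℝ} (hz : DifferentiableAt ℝ z x) :
    gradSq z x = ∑ j, gradSqS (fun y => z y j) x := by
  simp only [gradSq, gradDot, gradSqS, gradDotS, (hasFDerivAt_pi'.1 hz.hasFDerivAt _).fderiv]
  exact Finset.sum_comm

lemma fderiv_dotR_apply {u : (Fin m → ℝ) → Fin n → ℝ} (hu : DifferentiableAt ℝ u x)
    (e : Fin n → ℝ) (w : Fin m → ℝ) :
    fderiv ℝ (fun y => dotR (u y) e) x w = dotR (fderiv ℝ u x w) e := by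
  have h : HasFDerivAt (fun y => dotR (u y) e)
      (∑ j, e j • (ContinuousLinearMap.proj j).comp (fderiv ℝ u x)) x :=
    HasFDerivAt.fun_sum fun j _ => (hasFDerivAt_pi'.1 hu.hasFDerivAt j).mul_const (e j)
  rw [h.fderiv]
  simp [dotR, mul_comm]

lemma gradSqS_dotR_le {u : (Fin m → ℝ) → Fin n → ℝ} (hu : DifferentiableAt ℝ u x)
    (e : Fin n → ℝ) : gradSqS (fun y => dotR (u y) e) x ≤ normSq e * gradSq u x := by
  simp only [gradSqS, gradDotS, gradSq, gradDot, fderiv_dotR_apply hu]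
  rw [Finset.mul_sum]
  refine Finset.sum_le_sum fun i _ => ?_
  calc dotR (fderiv ℝ u x (Pi.single i 1)) e * dotR (fderiv ℝ u x (Pi.single i 1)) e
      = dotR (fderiv ℝ u x (Pi.single i 1)) e ^ 2 := by ring
    _ ≤ (∑ j, fderiv ℝ u x (Pi.single i 1) j ^ 2) * ∑ j, e j ^ 2 :=
      Finset.sum_mul_sq_le_sq_mul_sq _ _ _
    _ = _ := by simp only [normSq, sq, mul_comm]

lemma gradDot_smul_const {u : (Fin m → ℝ) → Fin n → ℝ} {ψ : (Fin m → ℝ) → ℝ}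
    (hu : DifferentiableAt ℝ u x) (hψ : DifferentiableAt ℝ ψ x) (e : Fin n → ℝ) :
    gradDot u (fun y => ψ y • e) x = gradDotS (fun y => dotR (u y) e) ψ x := by
  simp only [gradDot, gradDotS, (hψ.hasFDerivAt.smul_const e).fderiv, fderiv_dotR_apply hu,
    ContinuousLinearMap.smulRight_apply]
  simp only [dotR, Finset.sum_mul, Pi.smul_apply, smul_eq_mul]
  exact Finset.sum_congr rfl fun _ _ => Finset.sum_congr rfl fun _ _ => by ring

lemma gradSq_smul_const {ψ : (Fin m → ℝ) → ℝ} (hψ : DifferentiableAt ℝ ψ x) (e : Fin n → ℝ) :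
    gradSq (fun y => ψ y • e) x = normSq e * gradSqS ψ x := by
  simp only [gradSq, gradDot, gradSqS, gradDotS, (hψ.hasFDerivAt.smul_const e).fderiv,
    ContinuousLinearMap.smulRight_apply, normSq, Finset.sum_mul, Finset.mul_sum, Pi.smul_apply,
    smul_eq_mul]
  exact Finset.sum_congr rfl fun _ _ => Finset.sum_congr rfl fun _ _ => by ring

lemma gradSq_eq_add {u v : (Fin m → ℝ) → Fin n → ℝ} (hu : DifferentiableAt ℝ u x)
    (hv : DifferentiableAt ℝ v x) :
    gradSq v x = gradSq u x + 2 * gradDot u (v - u) x + gradSq (v - u) x := by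
  simp only [gradSq, gradDot, fderiv_sub hv hu, Finset.mul_sum, ← Finset.sum_add_distrib,
    FunLike.coe_sub, Pi.sub_apply]
  exact Finset.sum_congr rfl fun _ _ => Finset.sum_congr rfl fun _ _ => by ring

lemma gradSq_sub_le {u v : (Fin m → ℝ) → Fin n → ℝ} (hu : DifferentiableAt ℝ u x)
    (hv : DifferentiableAt ℝ v x) : gradSq (v - u) x ≤ 2 * (gradSq u x + gradSq v x) := by
  simp only [gradSq, gradDot, fderiv_sub hv hu, Finset.mul_sum, ← Finset.sum_add_distrib,
    FunLike.coe_sub, Pi.sub_apply]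
  exact Finset.sum_le_sum fun i _ => Finset.sum_le_sum fun j _ => by
    nlinarith [sq_nonneg (fderiv ℝ u x (Pi.single i 1) j + fderiv ℝ v x (Pi.single i 1) j)]

end Derivatives

section Integrability

variable {X : Type*} [MetricSpace X] [ProperSpace X] [MeasurableSpace X] [OpensMeasurableSpace X]
  {μ : Measure X} {Ω : Set X}

lemma Bornology.IsBounded.integrableOn_of_continuousOn_closure [IsFiniteMeasureOnCompacts μ]
    {E : Type*} [NormedAddCommGroup E] (hΩb : IsBounded Ω) {f : X → E}
    (hf : ContinuousOn f (closure Ω)) :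
    IntegrableOn f Ω μ :=
  (hf.integrableOn_compact hΩb.isCompact_closure).mono_set subset_closure

lemma Bornology.IsBounded.integrableOn_mul_of_continuousOn_closure (hΩb : IsBounded Ω)
    (hΩ : MeasurableSet Ω) {f g : X → ℝ} (hf : ContinuousOn f (closure Ω))
    (hg : IntegrableOn g Ω μ) : IntegrableOn (fun x => f x * g x) Ω μ := by
  obtain ⟨C, hC⟩ := hΩb.isCompact_closure.exists_bound_of_continuousOn hf
  exact hg.bdd_mul ((hf.mono subset_closure).aestronglyMeasurable hΩ)
    (ae_restrict_of_forall_mem hΩ fun x hx => hC x (subset_closure hx))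

end Integrability

lemma IsOpen.nonneg_on_closure_of_ae_pos {X : Type*} [TopologicalSpace X] [MeasurableSpace X]
    [OpensMeasurableSpace X] {μ : Measure X} [μ.IsOpenPosMeasure] {Ω : Set X} (hΩo : IsOpen Ω)
    {f : X → ℝ} (hf : ContinuousOn f (closure Ω)) (hpos : ∀ᵐ x ∂μ.restrict Ω, 0 < f x) :
    ∀ x ∈ closure Ω, 0 ≤ f x := by
  have hnonneg : ∀ x ∈ Ω, 0 ≤ f x := by
    intro x hx
    by_contra! hneg
    have hnull : μ (Ω ∩ f ⁻¹' Iio 0) = 0 := by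
      rw [ae_restrict_iff' hΩo.measurableSet] at hpos
      refine measure_mono_null (fun y hy => ?_) (ae_iff.1 hpos)
      exact fun h => (h hy.1).not_gt hy.2
    exact (((hf.mono subset_closure).isOpen_inter_preimage hΩo isOpen_Iio).measure_pos μ
      ⟨x, hx, hneg⟩).ne' hnull
  exact le_on_closure hnonneg continuousOn_const hf

lemma ConvexOn.add_derivWithin_mul_sub_le {S : Set ℝ} {f : ℝ → ℝ} (hf : ConvexOn ℝ S f)
    {x y : ℝ} (hx : x ∈ S) (hy : y ∈ S) (hd : DifferentiableWithinAt ℝ f S x) :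
    f x + derivWithin f S x * (y - x) ≤ f y := by
  rcases lt_trichotomy x y with h | rfl | h
  · have hs := hf.derivWithin_le_slope hx hy h hd
    rw [slope_def_field, le_div_iff₀ (sub_pos.2 h)] at hs
    linarith
  · simp
  · have hs := hf.slope_le_derivWithin hy hx h hd
    rw [slope_def_field, div_le_iff₀ (sub_pos.2 h)] at hs
    linarith

lemma ContDiffOn.differentiableAt_of_isOpen {E F : Type*} [NormedAddCommGroup E]
    [NormedSpace ℝ E] [NormedAddCommGroup F] [NormedSpace ℝ F] {s : Set E} {f : E → F}
    (hf : ContDiffOn ℝ 1 f s) (hs : IsOpen s) {x : E} (hx : x ∈ s) : DifferentiableAt ℝ f x :=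
  (hf.contDiffAt (hs.mem_nhds hx)).differentiableAt one_ne_zero

section Continuity

variable {X : Type*} [TopologicalSpace X] {n : ℕ} {s : Set X}

lemma ContinuousOn.dotR {u v : X → Fin n → ℝ} (hu : ContinuousOn u s) (hv : ContinuousOn v s) :
    ContinuousOn (fun x => dotR (u x) (v x)) s :=
  continuousOn_finsetSum _ fun j _ =>
    ((continuous_apply j).comp_continuousOn hu).mul ((continuous_apply j).comp_continuousOn hv)

lemma ContinuousOn.comp_one_sub_normSq {f : ℝ → ℝ} (hf : ContinuousOn f (Iic 1))
    {u : X → Fin n → ℝ} (hu : ContinuousOn u s) : ContinuousOn (fun x => f (1 - normSq (u x))) s :=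
  hf.comp (continuousOn_const.sub (continuous_normSq.comp_continuousOn hu))
    fun x _ => by simp [normSq_nonneg]

end Continuity

section Sobolev

variable {m n : ℕ} {Ω : Set (Fin m → ℝ)}

lemma integrableOn_gradDot {u v : (Fin m → ℝ) → Fin n → ℝ} (hu : IntegrableOn (gradSq u) Ω)
    (hv : IntegrableOn (gradSq v) Ω) : IntegrableOn (gradDot u v) Ω :=
  ((hu.add hv).div_const 2).mono' (measurable_gradDot u v).aestronglyMeasurable
    (Eventually.of_forall (abs_gradDot_le u v))

lemma integrableOn_gradDotS {φ ψ : (Fin m → ℝ) → ℝ} (hφ : IntegrableOn (gradSqS φ) Ω)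
    (hψ : IntegrableOn (gradSqS ψ) Ω) : IntegrableOn (gradDotS φ ψ) Ω :=
  ((hφ.add hψ).div_const 2).mono' (measurable_gradDotS φ ψ).aestronglyMeasurable
    (Eventually.of_forall (abs_gradDotS_le φ ψ))

lemma H10S.smul_const (hΩo : IsOpen Ω) {ψ : (Fin m → ℝ) → ℝ} (hψ : H10S Ω ψ) (e : Fin n → ℝ) :
    H10 Ω (fun x => ψ x • e) := by
  obtain ⟨h1, hcl, hgrad, hsq, h0⟩ := hψ
  refine ⟨h1.smul contDiffOn_const, hcl.smul continuousOn_const, ?_, ?_,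
    fun x hx => by simp [h0 hx]⟩
  · refine IntegrableOn.congr_fun (hgrad.const_mul (normSq e)) (fun x hx => ?_) hΩo.measurableSet
    exact (gradSq_smul_const (h1.differentiableAt_of_isOpen hΩo hx) e).symm
  · simp only [normSq_smul]
    exact hsq.mul_const (normSq e)

lemma H10.coord (hΩo : IsOpen Ω) {z : (Fin m → ℝ) → Fin n → ℝ} (hz : H10 Ω z) (j : Fin n) :
    H10S Ω (fun x => z x j) := by
  obtain ⟨h1, hcl, hgrad, hsq, h0⟩ := hz
  have hΩ := hΩo.measurableSet
  refine ⟨contDiffOn_pi.1 h1 j, (continuous_apply j).comp_continuousOn hcl, ?_, ?_,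
    fun x hx => congrFun (h0 hx) j⟩
  · refine hgrad.mono' (measurable_gradDotS _ _).aestronglyMeasurable
      (ae_restrict_of_forall_mem hΩ fun x hx => ?_)
    rw [Real.norm_of_nonneg (gradSqS_nonneg _ x),
      gradSq_eq_sum_gradSqS (h1.differentiableAt_of_isOpen hΩo hx)]
    exact Finset.single_le_sum (f := fun j => gradSqS (fun y => z y j) x)
      (fun j _ => gradSqS_nonneg _ x) (Finset.mem_univ j)
  · refine hsq.mono' ((((continuous_apply j).comp_continuousOn h1.continuousOn).pow 2)
      |>.aestronglyMeasurable hΩ) (Eventually.of_forall fun x => ?_)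
    rw [Real.norm_of_nonneg (sq_nonneg _)]
    exact Finset.single_le_sum (f := fun j => z x j ^ 2) (fun j _ => sq_nonneg _)
      (Finset.mem_univ j)

lemma integrableOn_gradSq_sub (hΩo : IsOpen Ω) {u v : (Fin m → ℝ) → Fin n → ℝ}
    (hu1 : ContDiffOn ℝ 1 u Ω) (hv1 : ContDiffOn ℝ 1 v Ω) (hugrad : IntegrableOn (gradSq u) Ω)
    (hvgrad : IntegrableOn (gradSq v) Ω) : IntegrableOn (gradSq (v - u)) Ω := by
  refine ((hugrad.add hvgrad).const_mul 2).mono' (measurable_gradDot _ _).aestronglyMeasurable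
    (ae_restrict_of_forall_mem hΩo.measurableSet fun x hx => ?_)
  rw [Real.norm_of_nonneg (gradSq_nonneg _ x)]
  exact gradSq_sub_le (hu1.differentiableAt_of_isOpen hΩo hx)
    (hv1.differentiableAt_of_isOpen hΩo hx)

lemma Admissible.H10_sub (hΩo : IsOpen Ω) {g u v : (Fin m → ℝ) → Fin n → ℝ}
    (hu : Admissible Ω g u) (hv : Admissible Ω g v) : H10 Ω (v - u) := by
  obtain ⟨hu1, hucl, hugrad, husq, hug⟩ := hu
  obtain ⟨hv1, hvcl, hvgrad, hvsq, hvg⟩ := hv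
  have hΩ := hΩo.measurableSet
  refine ⟨hv1.sub hu1, hvcl.sub hucl, integrableOn_gradSq_sub hΩo hu1 hv1 hugrad hvgrad, ?_,
    fun x hx => by simp [hug hx, hvg hx]⟩
  refine ((husq.add hvsq).const_mul 2).mono'
    ((continuous_normSq.comp_continuousOn (hv1.continuousOn.sub hu1.continuousOn))
      |>.aestronglyMeasurable hΩ) (Eventually.of_forall fun x => ?_)
  rw [Real.norm_of_nonneg (normSq_nonneg _)]
  exact normSq_sub_le (u x) (v x)

end Sobolev

section Picone

variable {m : ℕ} {Ω : Set (Fin m → ℝ)} {a φ ζ : (Fin m → ℝ) → ℝ}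

lemma H10S.sq_div (hΩo : IsOpen Ω) (hΩb : IsBounded Ω) (hζ : H10S Ω ζ)
    {q : (Fin m → ℝ) → ℝ} (hq1 : ContDiffOn ℝ 1 q Ω) (hqcl : ContinuousOn q (closure Ω))
    (hqgrad : IntegrableOn (gradSqS q) Ω) (hq0 : ∀ x ∈ closure Ω, q x ≠ 0) :
    H10S Ω (fun x => ζ x ^ 2 / q x) := by
  obtain ⟨hζ1, hζcl, hζgrad, -, hζ0⟩ := hζ
  have hΩ := hΩo.measurableSet
  have hcl : ContinuousOn (fun x => ζ x ^ 2 / q x) (closure Ω) := (hζcl.pow 2).div hqcl hq0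
  have ht : ContinuousOn (fun x => ζ x / q x) (closure Ω) := hζcl.div hqcl hq0
  refine ⟨(hζ1.pow 2).div hq1 fun x hx => hq0 x (subset_closure hx), hcl, ?_,
    hΩb.integrableOn_of_continuousOn_closure (hcl.pow 2), fun x hx => by simp [hζ0 hx]⟩
  have hdom : IntegrableOn (fun x => 2 * (2 * (ζ x / q x)) ^ 2 * gradSqS ζ x
      + 2 * (-(ζ x / q x) ^ 2) ^ 2 * gradSqS q x) Ω :=
    (hΩb.integrableOn_mul_of_continuousOn_closure hΩ
      (continuousOn_const.mul ((continuousOn_const.mul ht).pow 2)) hζgrad).add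
    (hΩb.integrableOn_mul_of_continuousOn_closure hΩ
      (continuousOn_const.mul ((ht.pow 2).neg.pow 2)) hqgrad)
  refine hdom.mono' (measurable_gradDotS _ _).aestronglyMeasurable
    (ae_restrict_of_forall_mem hΩ fun x hx => ?_)
  rw [Real.norm_of_nonneg (gradSqS_nonneg _ x)]
  exact gradSqS_le_of_fderiv_eq (hasFDerivAt_sq_div
    (hζ1.differentiableAt_of_isOpen hΩo hx).hasFDerivAt
    (hq1.differentiableAt_of_isOpen hΩo hx).hasFDerivAt (hq0 x (subset_closure hx))).fderiv

/-- Testing the supersolution inequality with `ζ² / (φ + δ)`. -/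
lemma integral_mul_sq_mul_div_le (hΩo : IsOpen Ω) (hΩb : IsBounded Ω)
    (hφ1 : ContDiffOn ℝ 1 φ Ω) (hφcl : ContinuousOn φ (closure Ω))
    (hφgrad : IntegrableOn (gradSqS φ) Ω) (hφ0 : ∀ x ∈ closure Ω, 0 ≤ φ x)
    (hsuper : ∀ ψ, H10S Ω ψ → (∀ x ∈ Ω, 0 ≤ ψ x) →
      ∫ x in Ω, a x * φ x * ψ x ≤ ∫ x in Ω, gradDotS φ ψ x)
    (hζ : H10S Ω ζ) {δ : ℝ} (hδ : 0 < δ) :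
    ∫ x in Ω, a x * ζ x ^ 2 * (φ x / (φ x + δ)) ≤ ∫ x in Ω, gradSqS ζ x := by
  have hΩ := hΩo.measurableSet
  have hq0 : ∀ x ∈ closure Ω, φ x + δ ≠ 0 := fun x hx =>
    (add_pos_of_nonneg_of_pos (hφ0 x hx) hδ).ne'
  have hψ : H10S Ω (fun x => ζ x ^ 2 / (φ x + δ)) :=
    hζ.sq_div hΩo hΩb (hφ1.add contDiffOn_const) (hφcl.add continuousOn_const)
      (by simpa only [gradSqS_add_const] using hφgrad) hq0
  have hpicone : ∀ x ∈ Ω, gradDotS φ (fun x => ζ x ^ 2 / (φ x + δ)) x ≤ gradSqS ζ x := by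
    intro x hx
    have hD := (hasFDerivAt_sq_div (hζ.1.differentiableAt_of_isOpen hΩo hx).hasFDerivAt
      ((hφ1.differentiableAt_of_isOpen hΩo hx).hasFDerivAt.add_const δ)
      (hq0 x (subset_closure hx))).fderiv
    have h := two_mul_gradDotS_sub_le φ ζ x (ζ x / (φ x + δ))
    rw [gradDotS_eq_of_fderiv_eq hD]
    unfold gradSqS at h ⊢
    linarith
  calc ∫ x in Ω, a x * ζ x ^ 2 * (φ x / (φ x + δ))
      = ∫ x in Ω, a x * φ x * (ζ x ^ 2 / (φ x + δ)) :=
        setIntegral_congr_fun hΩ fun x _ => by ring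
    _ ≤ ∫ x in Ω, gradDotS φ (fun x => ζ x ^ 2 / (φ x + δ)) x :=
        hsuper _ hψ fun x hx => div_nonneg (sq_nonneg _) (hφ0 x (subset_closure hx) |>.trans
          (le_add_of_nonneg_right hδ.le))
    _ ≤ ∫ x in Ω, gradSqS ζ x :=
        setIntegral_mono_on (integrableOn_gradDotS hφgrad hψ.2.2.1) hζ.2.2.1 hΩ hpicone

/-- Allegretto–Piepenbrink: let `δ → 0` in `integral_mul_sq_mul_div_le`. -/
theorem integral_mul_sq_le_integral_gradSqS (hΩo : IsOpen Ω) (hΩb : IsBounded Ω)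
    (ha : ContinuousOn a (closure Ω)) (hφ1 : ContDiffOn ℝ 1 φ Ω)
    (hφcl : ContinuousOn φ (closure Ω)) (hφgrad : IntegrableOn (gradSqS φ) Ω)
    (hφpos : ∀ᵐ x ∂volume.restrict Ω, 0 < φ x)
    (hsuper : ∀ ψ, H10S Ω ψ → (∀ x ∈ Ω, 0 ≤ ψ x) →
      ∫ x in Ω, a x * φ x * ψ x ≤ ∫ x in Ω, gradDotS φ ψ x)
    (hζ : H10S Ω ζ) : ∫ x in Ω, a x * ζ x ^ 2 ≤ ∫ x in Ω, gradSqS ζ x := by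
  have hΩ := hΩo.measurableSet
  have hφ0 := hΩo.nonneg_on_closure_of_ae_pos hφcl hφpos
  have hδ : ∀ k : ℕ, (0 : ℝ) < 1 / ((k : ℝ) + 1) := fun k => by positivity
  have hlim : Tendsto (fun k : ℕ => ∫ x in Ω, a x * ζ x ^ 2 * (φ x / (φ x + 1 / ((k : ℝ) + 1))))
      atTop (𝓝 (∫ x in Ω, a x * ζ x ^ 2)) := by
    refine tendsto_integral_of_dominated_convergence (fun x => ‖a x * ζ x ^ 2‖) (fun k => ?_)
      (hΩb.integrableOn_of_continuousOn_closure (ha.mul (hζ.2.1.pow 2))).norm (fun k => ?_) ?_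
    · exact ((ha.mul (hζ.2.1.pow 2)).mul (hφcl.div (hφcl.add continuousOn_const)
        fun x hx => (add_pos_of_nonneg_of_pos (hφ0 x hx) (hδ k)).ne')).mono subset_closure
        |>.aestronglyMeasurable hΩ
    · refine ae_restrict_of_forall_mem hΩ fun x hx => ?_
      have hq := add_pos_of_nonneg_of_pos (hφ0 x (subset_closure hx)) (hδ k)
      rw [norm_mul]
      refine mul_le_of_le_one_right (norm_nonneg _) ?_
      rw [Real.norm_of_nonneg (div_nonneg (hφ0 x (subset_closure hx)) hq.le), div_le_one hq]
      linarith [hδ k]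
    · filter_upwards [hφpos] with x hx
      have h := ((tendsto_one_div_add_atTop_nhds_zero_nat (𝕜 := ℝ)).const_add (φ x)).inv₀
        (by simpa using hx.ne')
      simpa [div_eq_mul_inv, mul_inv_cancel₀ hx.ne'] using
        (h.const_mul (φ x)).const_mul (a x * ζ x ^ 2)
  exact le_of_tendsto' hlim fun k => integral_mul_sq_mul_div_le hΩo hΩb hφ1 hφcl hφgrad hφ0
    hsuper hζ (hδ k)

end Picone

section GinzburgLandau

variable {m n : ℕ} {Ω : Set (Fin m → ℝ)}

theorem integral_mul_normSq_le_integral_gradSq (hΩo : IsOpen Ω) (hΩb : IsBounded Ω)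
    {a : (Fin m → ℝ) → ℝ} (ha : ContinuousOn a (closure Ω))
    (hscalar : ∀ ζ, H10S Ω ζ → ∫ x in Ω, a x * ζ x ^ 2 ≤ ∫ x in Ω, gradSqS ζ x)
    {z : (Fin m → ℝ) → Fin n → ℝ} (hz : H10 Ω z) :
    ∫ x in Ω, a x * normSq (z x) ≤ ∫ x in Ω, gradSq z x := by
  have hΩ := hΩo.measurableSet
  calc ∫ x in Ω, a x * normSq (z x) = ∑ j, ∫ x in Ω, a x * z x j ^ 2 := by
        rw [← integral_finsetSum (f := fun j x => a x * z x j ^ 2) _ fun j _ =>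
          hΩb.integrableOn_of_continuousOn_closure
            (ha.mul (((continuous_apply j).comp_continuousOn hz.2.1).pow 2))]
        simp only [normSq, Finset.mul_sum]
    _ ≤ ∑ j, ∫ x in Ω, gradSqS (fun y => z y j) x :=
        Finset.sum_le_sum fun j _ => hscalar _ (hz.coord hΩo j)
    _ = ∫ x in Ω, gradSq z x := by
        rw [← integral_finsetSum _ fun j _ => (hz.coord hΩo j).2.2.1]
        exact setIntegral_congr_fun hΩ fun x hx =>
          (gradSq_eq_sum_gradSqS (hz.1.differentiableAt_of_isOpen hΩo hx)).symm

variable {W : ℝ → ℝ} {ε : ℝ} {g u : (Fin m → ℝ) → Fin n → ℝ}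

lemma continuousOn_Wd (hW : ContDiffOn ℝ 1 W (Iic 1)) : ContinuousOn (Wd W) (Iic 1) :=
  hW.continuousOn_derivWithin (uniqueDiffOn_Iic 1) le_rfl

lemma IsCritical.integral_gradDot_eq (hΩb : IsBounded Ω) (hW : ContDiffOn ℝ 1 W (Iic 1))
    (huC : IsCritical W ε Ω u) (hu : Admissible Ω g u) {v : (Fin m → ℝ) → Fin n → ℝ}
    (hv : H10 Ω v) :
    ∫ x in Ω, gradDot u v x
      = ∫ x in Ω, 1 / ε ^ 2 * Wd W (1 - normSq (u x)) * dotR (u x) (v x) := by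
  have hpot : IntegrableOn (fun x => 1 / ε ^ 2 * Wd W (1 - normSq (u x)) * dotR (u x) (v x)) Ω :=
    hΩb.integrableOn_of_continuousOn_closure <| (continuousOn_const.mul
      ((continuousOn_Wd hW).comp_one_sub_normSq hu.2.1)).mul (hu.2.1.dotR hv.2.1)
  have h := huC v hv
  rwa [integral_sub (integrableOn_gradDot hu.2.2.1 hv.2.2.1) hpot, sub_eq_zero] at h

lemma IsCritical.integral_gradDotS_dotR_eq (hΩo : IsOpen Ω) (hΩb : IsBounded Ω)
    (hW : ContDiffOn ℝ 1 W (Iic 1)) (huC : IsCritical W ε Ω u) (hu : Admissible Ω g u)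
    (e : Fin n → ℝ) {ψ : (Fin m → ℝ) → ℝ} (hψ : H10S Ω ψ) :
    ∫ x in Ω, gradDotS (fun y => dotR (u y) e) ψ x
      = ∫ x in Ω, 1 / ε ^ 2 * Wd W (1 - normSq (u x)) * dotR (u x) e * ψ x := by
  have hΩ := hΩo.measurableSet
  calc ∫ x in Ω, gradDotS (fun y => dotR (u y) e) ψ x
      = ∫ x in Ω, gradDot u (fun y => ψ y • e) x :=
        setIntegral_congr_fun hΩ fun x hx => (gradDot_smul_const
          (hu.1.differentiableAt_of_isOpen hΩo hx) (hψ.1.differentiableAt_of_isOpen hΩo hx) e).symm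
    _ = ∫ x in Ω, 1 / ε ^ 2 * Wd W (1 - normSq (u x)) * dotR (u x) (ψ x • e) :=
        huC.integral_gradDot_eq hΩb hW hu (hψ.smul_const hΩo e)
    _ = _ := setIntegral_congr_fun hΩ fun x _ => by rw [dotR_smul_right]; ring

/-- The component `u · e` is a positive solution of the linearised scalar equation. -/
theorem IsCritical.integral_mul_normSq_le_integral_gradSq (hΩo : IsOpen Ω) (hΩb : IsBounded Ω)
    (hW : ContDiffOn ℝ 1 W (Iic 1)) (huC : IsCritical W ε Ω u) (hu : Admissible Ω g u)
    {e : Fin n → ℝ} (hupos : ∀ᵐ x ∂volume.restrict Ω, 0 < dotR (u x) e)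
    {z : (Fin m → ℝ) → Fin n → ℝ} (hz : H10 Ω z) :
    ∫ x in Ω, 1 / ε ^ 2 * Wd W (1 - normSq (u x)) * normSq (z x) ≤ ∫ x in Ω, gradSq z x := by
  have ha : ContinuousOn (fun x => 1 / ε ^ 2 * Wd W (1 - normSq (u x))) (closure Ω) :=
    continuousOn_const.mul ((continuousOn_Wd hW).comp_one_sub_normSq hu.2.1)
  refine _root_.integral_mul_normSq_le_integral_gradSq hΩo hΩb ha (fun ζ hζ => ?_) hz
  refine integral_mul_sq_le_integral_gradSqS hΩo hΩb ha ?_ (hu.2.1.dotR continuousOn_const)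
    ?_ hupos (fun ψ hψ _ => (huC.integral_gradDotS_dotR_eq hΩo hΩb hW hu e hψ).ge) hζ
  · exact ContDiffOn.sum fun j _ => (contDiffOn_pi.1 hu.1 j).mul contDiffOn_const
  · refine (hu.2.2.1.const_mul (normSq e)).mono' (measurable_gradDotS _ _).aestronglyMeasurable
      (ae_restrict_of_forall_mem hΩo.measurableSet fun x hx => ?_)
    rw [Real.norm_of_nonneg (gradSqS_nonneg _ x)]
    exact gradSqS_dotR_le (hu.1.differentiableAt_of_isOpen hΩo hx) e

lemma W_one_sub_normSq_sub_le (hW : ContDiffOn ℝ 1 W (Iic 1)) (hWc : ConvexOn ℝ (Iic 1) W)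
    (a b : Fin n → ℝ) :
    W (1 - normSq a) - Wd W (1 - normSq a) * (2 * dotR a (b - a) + normSq (b - a))
      ≤ W (1 - normSq b) := by
  have hmem : ∀ c : Fin n → ℝ, 1 - normSq c ∈ Iic (1 : ℝ) := fun c => by simp [normSq_nonneg]
  have h := hWc.add_derivWithin_mul_sub_le (hmem a) (hmem b)
    (hW.differentiableOn one_ne_zero _ (hmem a))
  rw [normSq_eq_add a b] at h ⊢
  unfold Wd
  linarith

lemma GLenergy_integrand_add_le (hW : ContDiffOn ℝ 1 W (Iic 1)) (hWc : ConvexOn ℝ (Iic 1) W)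
    {v : (Fin m → ℝ) → Fin n → ℝ} {x : Fin m → ℝ} (hu : DifferentiableAt ℝ u x)
    (hv : DifferentiableAt ℝ v x) :
    gradSq u x / 2 + W (1 - normSq (u x)) / (2 * ε ^ 2)
      + (gradDot u (v - u) x - 1 / ε ^ 2 * Wd W (1 - normSq (u x)) * dotR (u x) ((v - u) x))
      + (gradSq (v - u) x - 1 / ε ^ 2 * Wd W (1 - normSq (u x)) * normSq ((v - u) x)) / 2
      ≤ gradSq v x / 2 + W (1 - normSq (v x)) / (2 * ε ^ 2) := by
  have hpot := mul_le_mul_of_nonneg_left (W_one_sub_normSq_sub_le hW hWc (u x) (v x))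
    (by positivity : (0 : ℝ) ≤ 1 / (2 * ε ^ 2))
  rw [gradSq_eq_add hu hv]
  simp only [Pi.sub_apply] at hpot ⊢
  linear_combination hpot

lemma GLenergy_add_le (hΩo : IsOpen Ω) (hΩb : IsBounded Ω) (hW : ContDiffOn ℝ 1 W (Iic 1))
    (hWc : ConvexOn ℝ (Iic 1) W) (hu : Admissible Ω g u) {g' v : (Fin m → ℝ) → Fin n → ℝ}
    (hv : Admissible Ω g' v) :
    GLenergy W ε Ω u
      + ((∫ x in Ω, gradDot u (v - u) x)
        - ∫ x in Ω, 1 / ε ^ 2 * Wd W (1 - normSq (u x)) * dotR (u x) ((v - u) x))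
      + ((∫ x in Ω, gradSq (v - u) x)
        - ∫ x in Ω, 1 / ε ^ 2 * Wd W (1 - normSq (u x)) * normSq ((v - u) x)) / 2
      ≤ GLenergy W ε Ω v := by
  have hΩ := hΩo.measurableSet
  set c := fun x => 1 / ε ^ 2 * Wd W (1 - normSq (u x))
  have hc : ContinuousOn c (closure Ω) :=
    continuousOn_const.mul ((continuousOn_Wd hW).comp_one_sub_normSq hu.2.1)
  have hdensity : ∀ {g w : (Fin m → ℝ) → Fin n → ℝ}, Admissible Ω g w →
      IntegrableOn (fun x => gradSq w x / 2 + W (1 - normSq (w x)) / (2 * ε ^ 2)) Ω :=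
    fun hw => (hw.2.2.1.div_const 2).add ((hΩb.integrableOn_of_continuousOn_closure
      (hW.continuousOn.comp_one_sub_normSq hw.2.1)).div_const _)
  have hzgrad := integrableOn_gradSq_sub hΩo hu.1 hv.1 hu.2.2.1 hv.2.2.1
  have hA := integrableOn_gradDot hu.2.2.1 hzgrad
  have hB : IntegrableOn (fun x => c x * dotR (u x) ((v - u) x)) Ω :=
    hΩb.integrableOn_of_continuousOn_closure (hc.mul (hu.2.1.dotR (hv.2.1.sub hu.2.1)))
  have hD : IntegrableOn (fun x => c x * normSq ((v - u) x)) Ω :=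
    hΩb.integrableOn_of_continuousOn_closure
      (hc.mul (continuous_normSq.comp_continuousOn (hv.2.1.sub hu.2.1)))
  have hAB : IntegrableOn (fun x => gradDot u (v - u) x - c x * dotR (u x) ((v - u) x)) Ω :=
    hA.sub hB
  have hCD : IntegrableOn (fun x => (gradSq (v - u) x - c x * normSq ((v - u) x)) / 2) Ω :=
    (hzgrad.sub hD).div_const 2
  calc
    _ = ∫ x in Ω, (gradSq u x / 2 + W (1 - normSq (u x)) / (2 * ε ^ 2)
          + (gradDot u (v - u) x - c x * dotR (u x) ((v - u) x))
          + (gradSq (v - u) x - c x * normSq ((v - u) x)) / 2) := by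
      rw [integral_add ((hdensity hu).fun_add hAB) hCD, integral_add (hdensity hu) hAB,
        integral_sub hA hB, integral_div, integral_sub hzgrad hD]
      rfl
    _ ≤ GLenergy W ε Ω v :=
      setIntegral_mono_on (((hdensity hu).fun_add hAB).fun_add hCD) (hdensity hv) hΩ
        fun x hx => GLenergy_integrand_add_le hW hWc (hu.1.differentiableAt_of_isOpen hΩo hx)
          (hv.1.differentiableAt_of_isOpen hΩo hx)

end GinzburgLandau

theorem statement_4_general {m n : ℕ}
    (Ω : Set (Fin m → ℝ)) (hΩo : IsOpen Ω) (hΩb : IsBounded Ω)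
    (W : ℝ → ℝ) (hW : ContDiffOn ℝ 1 W (Iic (1:ℝ)))
    (hWconv : StrictConvexOn ℝ (Iic (1:ℝ)) W)
    (ubd : (Fin m → ℝ) → Fin n → ℝ)
    (e : Fin n → ℝ)
    (ε : ℝ)
    (u : (Fin m → ℝ) → Fin n → ℝ)
    (huA : Admissible Ω ubd u)
    (huC : IsCritical W ε Ω u)
    (hupos : ∀ᵐ x ∂(volume.restrict Ω), 0 < dotR (u x) e) :
    IsMinimiser W ε Ω ubd u := by
  refine ⟨huA, fun v hvA => ?_⟩
  have hz := huA.H10_sub hΩo hvA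
  have hcrit := huC.integral_gradDot_eq hΩb hW huA hz
  have hstable := huC.integral_mul_normSq_le_integral_gradSq hΩo hΩb hW huA hupos hz
  have henergy := GLenergy_add_le (ε := ε) hΩo hΩb hW hWconv.convexOn huA hvA
  linarith

/-- Theorem 1.3, minimality: a critical point of `E_ε` in `𝒜` which is
positive in the direction `e` inside `Ω` is a minimiser of `E_ε` in `𝒜`. -/
theorem statement_4 {m n : ℕ} (hm : 1 ≤ m) (hn : 1 ≤ n)
    (Ω : Set (Fin m → ℝ)) (hΩo : IsOpen Ω) (hΩc : IsConnected Ω) (hΩb : IsBounded Ω)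
    (W : ℝ → ℝ) (hW : ContDiffOn ℝ 1 W (Iic (1:ℝ))) (hW0 : W 0 = 0)
    (hWpos : ∀ t ∈ Iic (1:ℝ), t ≠ 0 → 0 < W t)
    (hWconv : StrictConvexOn ℝ (Iic (1:ℝ)) W)
    (ubd : (Fin m → ℝ) → Fin n → ℝ) (hubdL : IsBounded (ubd '' frontier Ω))
    (e : Fin n → ℝ) (he : normSq e = 1)
    (hbd : ∀ᵐ x ∂((μH[(m : ℝ) - 1]).restrict (frontier Ω)), 0 ≤ dotR (ubd x) e)
    (ε : ℝ) (hε : 0 < ε)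
    (u : (Fin m → ℝ) → Fin n → ℝ)
    (huA : Admissible Ω ubd u) (huL : IsBounded (u '' Ω))
    (huC : IsCritical W ε Ω u)
    (hupos : ∀ᵐ x ∂(volume.restrict Ω), 0 < dotR (u x) e) :
    IsMinimiser W ε Ω ubd u :=
  statement_4_general Ω hΩo hΩb W hW hWconv ubd e ε u huA huC hupos
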